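/- arXiv:hep-th/0207225 — 3 statements merged into one kernel-verified Lean document; each statement's English description precedes it below -/
import Mathlib

section
/- For the plane-fronted metric, the covariant derivative of the null covector k satisfies D_α k_β = k_α k_β (Σ_γ k^γ ∂_γ h) = k_α k_β ∂_0 h at every point of ℝ^n. -/
noncomputable section

/-- Partial derivative of a function on `ℝ^n` in the `μ`-th coordinate direction. -/
def pd {n : ℕ} (μ : Fin n) (f : (Fin n → ℝ) → ℝ) : (Fin n → ℝ) → ℝ :=
  fun p => fderiv ℝ f p (Pi.single μ 1)

/-- Embedding of a transverse index `a ∈ {0,…,m-1}` as the coordinate index `a+2`. -/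
def tIdx {m : ℕ} (a : Fin m) : Fin (m + 2) := a.succ.succ

/-- Covariant components `g_{αβ}` of the plane-fronted metric. -/
def gLow (m : ℕ) (η : Matrix (Fin m) (Fin m) ℝ) (h : (Fin (m + 2) → ℝ) → ℝ)
    (p : Fin (m + 2) → ℝ) (α β : Fin (m + 2)) : ℝ :=
  (if (α = 0 ∧ β = 1) ∨ (α = 1 ∧ β = 0) then 1 else 0)
    + (if α = 1 ∧ β = 1 then 2 * h p else 0)
    + ∑ a : Fin m, ∑ b : Fin m, if α = tIdx a ∧ β = tIdx b then η a b else 0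

/-- Contravariant components `g^{αβ}` of the plane-fronted metric. -/
def gUp (m : ℕ) (ηinv : Matrix (Fin m) (Fin m) ℝ) (h : (Fin (m + 2) → ℝ) → ℝ)
    (p : Fin (m + 2) → ℝ) (α β : Fin (m + 2)) : ℝ :=
  (if (α = 0 ∧ β = 1) ∨ (α = 1 ∧ β = 0) then 1 else 0)
    + (if α = 0 ∧ β = 0 then -(2 * h p) else 0)
    + ∑ a : Fin m, ∑ b : Fin m, if α = tIdx a ∧ β = tIdx b then ηinv a b else 0

/-- Christoffel symbols `Γ^α_{βγ}` of the plane-fronted metric. -/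
def chr (m : ℕ) (η ηinv : Matrix (Fin m) (Fin m) ℝ) (h : (Fin (m + 2) → ℝ) → ℝ)
    (p : Fin (m + 2) → ℝ) (α β γ : Fin (m + 2)) : ℝ :=
  (1 / 2) * ∑ δ : Fin (m + 2), gUp m ηinv h p α δ *
    (pd β (fun q => gLow m η h q δ γ) p + pd γ (fun q => gLow m η h q δ β) p
      - pd δ (fun q => gLow m η h q β γ) p)

/-- Riemann curvature tensor `R^α_{βγδ}` of the plane-fronted metric. -/
def riem (m : ℕ) (η ηinv : Matrix (Fin m) (Fin m) ℝ) (h : (Fin (m + 2) → ℝ) → ℝ)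
    (p : Fin (m + 2) → ℝ) (α β γ δ : Fin (m + 2)) : ℝ :=
  pd γ (fun q => chr m η ηinv h q α δ β) p - pd δ (fun q => chr m η ηinv h q α γ β) p
    + ∑ ε : Fin (m + 2), (chr m η ηinv h p α γ ε * chr m η ηinv h p ε δ β
      - chr m η ηinv h p α δ ε * chr m η ηinv h p ε γ β)

/-- Ricci tensor `R_{βδ}` of the plane-fronted metric. -/
def ricci (m : ℕ) (η ηinv : Matrix (Fin m) (Fin m) ℝ) (h : (Fin (m + 2) → ℝ) → ℝ)
    (p : Fin (m + 2) → ℝ) (β δ : Fin (m + 2)) : ℝ :=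
  ∑ α : Fin (m + 2), riem m η ηinv h p α β α δ

/-- Contravariant components `k^α = δ^α_0` of the null vector `k`. -/
def kUp {m : ℕ} (α : Fin (m + 2)) : ℝ := if α = 0 then 1 else 0

/-- Covariant components `k_α = δ^1_α` of the null vector `k`. -/
def kDown {m : ℕ} (α : Fin (m + 2)) : ℝ := if α = 1 then 1 else 0

/-- Covariant derivative `D_α k_β = −Σ_γ Γ^γ_{αβ} k_γ` of the constant-component
null covector `k`. -/
def covDk (m : ℕ) (η ηinv : Matrix (Fin m) (Fin m) ℝ) (h : (Fin (m + 2) → ℝ) → ℝ)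
    (p : Fin (m + 2) → ℝ) (α β : Fin (m + 2)) : ℝ :=
  - ∑ γ : Fin (m + 2), chr m η ηinv h p γ α β * kDown γ

lemma one_ne_tIdx {m : ℕ} (a : Fin m) : (1 : Fin (m + 2)) ≠ tIdx a := by
  intro he
  have := congrArg Fin.val he
  simp [tIdx, Fin.val_succ] at this

lemma pd_gLow (m : ℕ) (η : Matrix (Fin m) (Fin m) ℝ) (h : (Fin (m + 2) → ℝ) → ℝ)
    (hd : Differentiable ℝ h) (μ a b : Fin (m + 2)) (p : Fin (m + 2) → ℝ) :
    pd μ (fun q => gLow m η h q a b) p = if a = 1 ∧ b = 1 then 2 * pd μ h p else 0 := by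
  unfold pd gLow
  have heq : (fun q : Fin (m + 2) → ℝ =>
      (if (a = 0 ∧ b = 1) ∨ (a = 1 ∧ b = 0) then (1:ℝ) else 0)
        + (if a = 1 ∧ b = 1 then 2 * h q else 0)
        + ∑ x : Fin m, ∑ y : Fin m, if a = tIdx x ∧ b = tIdx y then η x y else 0)
      = fun q => ((if (a = 0 ∧ b = 1) ∨ (a = 1 ∧ b = 0) then (1:ℝ) else 0)
        + ∑ x : Fin m, ∑ y : Fin m, if a = tIdx x ∧ b = tIdx y then η x y else 0)
        + (if a = 1 ∧ b = 1 then 2 * h q else 0) := by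
    funext q; ring
  rw [heq]
  by_cases hc : a = 1 ∧ b = 1
  · simp only [if_pos hc]
    rw [fderiv_const_add, fderiv_const_mul (hd p)]
    simp
  · simp only [if_neg hc]
    rw [show (fun q : Fin (m + 2) → ℝ =>
        ((if (a = 0 ∧ b = 1) ∨ (a = 1 ∧ b = 0) then (1:ℝ) else 0)
        + ∑ x : Fin m, ∑ y : Fin m, if a = tIdx x ∧ b = tIdx y then η x y else 0) + 0)
      = fun _ => ((if (a = 0 ∧ b = 1) ∨ (a = 1 ∧ b = 0) then (1:ℝ) else 0)
        + ∑ x : Fin m, ∑ y : Fin m, if a = tIdx x ∧ b = tIdx y then η x y else 0) by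
        funext q; ring]
    simp [fderiv_const]

lemma chr_one (m : ℕ) (η ηinv : Matrix (Fin m) (Fin m) ℝ)
    (h : (Fin (m + 2) → ℝ) → ℝ) (hd : Differentiable ℝ h)
    (p : Fin (m + 2) → ℝ) (α β : Fin (m + 2)) :
    chr m η ηinv h p 1 α β = if α = 1 ∧ β = 1 then -(pd (0 : Fin (m + 2)) h p) else 0 := by
  unfold chr
  have hgup : ∀ δ : Fin (m + 2), gUp m ηinv h p 1 δ = if δ = 0 then 1 else 0 := by
    intro δ
    unfold gUp
    have h10 : (1 : Fin (m + 2)) ≠ 0 := by simp [Fin.ext_iff]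
    simp [h10, one_ne_tIdx]
  have hsum : ∀ δ : Fin (m + 2), gUp m ηinv h p 1 δ *
      (pd α (fun q => gLow m η h q δ β) p + pd β (fun q => gLow m η h q δ α) p
        - pd δ (fun q => gLow m η h q α β) p)
      = if δ = 0 then
          (pd α (fun q => gLow m η h q 0 β) p + pd β (fun q => gLow m η h q 0 α) p
            - pd (0 : Fin (m + 2)) (fun q => gLow m η h q α β) p) else 0 := by
    intro δ
    rw [hgup]
    by_cases hδ : δ = 0 <;> simp [hδ]
  rw [Finset.sum_congr rfl fun δ _ => hsum δ, Finset.sum_ite_eq' Finset.univ (0 : Fin (m + 2))]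
  have h01 : ¬((0 : Fin (m + 2)) = 1 ∧ β = 1) := by
    simp [Fin.ext_iff]
  have h01' : ¬((0 : Fin (m + 2)) = 1 ∧ α = 1) := by
    simp [Fin.ext_iff]
  rw [pd_gLow m η h hd α 0 β p, pd_gLow m η h hd β 0 α p, pd_gLow m η h hd 0 α β p,
    if_neg h01, if_neg h01']
  by_cases hc : α = 1 ∧ β = 1 <;> simp [hc]

/-- for the plane-fronted metric the covariant derivative of the null
covector `k` satisfies `D_α k_β = k_α k_β (Σ_γ k^γ ∂_γ h) = k_α k_β ∂_0 h`. -/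
theorem stmt1 (m : ℕ) (hm : 1 ≤ m) (η ηinv : Matrix (Fin m) (Fin m) ℝ)
    (hηsymm : η.IsSymm) (hη : η * ηinv = 1) (hη' : ηinv * η = 1)
    (h : (Fin (m + 2) → ℝ) → ℝ) (hh : ContDiff ℝ (⊤ : ℕ∞) h) :
    ∀ (p : Fin (m + 2) → ℝ) (α β : Fin (m + 2)),
      covDk m η ηinv h p α β = kDown α * kDown β * (∑ γ : Fin (m + 2), kUp γ * pd γ h p)
      ∧ covDk m η ηinv h p α β = kDown α * kDown β * pd (0 : Fin (m + 2)) h p := by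
  intro p α β
  have hd : Differentiable ℝ h := hh.differentiable (by simp)
  have key : covDk m η ηinv h p α β = kDown α * kDown β * pd (0 : Fin (m + 2)) h p := by
    unfold covDk kDown
    rw [show (∑ γ : Fin (m + 2), chr m η ηinv h p γ α β * if γ = 1 then (1:ℝ) else 0)
        = ∑ γ : Fin (m + 2), if γ = 1 then chr m η ηinv h p 1 α β else 0 by
      refine Finset.sum_congr rfl fun γ _ => ?_
      by_cases hγ : γ = 1 <;> simp [hγ]]
    rw [Finset.sum_ite_eq' Finset.univ (1 : Fin (m + 2))]
    rw [chr_one m η ηinv h hd p α β]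
    simp only [Finset.mem_univ, if_true]
    by_cases hc : α = 1 ∧ β = 1
    · simp [hc]
    · have : ¬(α = 1) ∨ ¬(β = 1) := by tauto
      rcases this with h1 | h1 <;> simp [hc, h1]
  refine ⟨?_, key⟩
  rw [key]
  congr 1
  rw [show (∑ γ : Fin (m + 2), kUp γ * pd γ h p)
      = ∑ γ : Fin (m + 2), if γ = 0 then pd (0 : Fin (m + 2)) h p else 0 by
    refine Finset.sum_congr rfl fun γ _ => ?_
    unfold kUp
    by_cases hγ : γ = 0 <;> simp [hγ]]
  rw [Finset.sum_ite_eq' Finset.univ (0 : Fin (m + 2))]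
  simp
end
end

section
/- The Ricci tensor of the plane-fronted metric has the following components at every point of ℝ^n: R_{01} = R_{10} = ∂_0∂_0 h, R_{1a} = R_{a1} = ∂_0∂_a h for transverse indices a, R_{11} = 2h ∂_0∂_0 h − Σ_{a,b} η^{ab} ∂_a∂_b h, and all other components (R_{00}, R_{0a}, R_{a0}, R_{ab}) vanish identically. -/
noncomputable section

set_option linter.dupNamespace false
set_option maxHeartbeats 1000000

namespace PP

/-! ### pd calculus -/

variable {n : ℕ} {μ ν : Fin n} {f g : (Fin n → ℝ) → ℝ} {p : Fin n → ℝ} {c k : ℝ}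

lemma pd_const : pd μ (fun _ => c) p = 0 := by simp [pd]

lemma pd_add (hf : DifferentiableAt ℝ f p) (hg : DifferentiableAt ℝ g p) :
    pd μ (fun q => f q + g q) p = pd μ f p + pd μ g p := by
  simp [pd, fderiv_fun_add hf hg]

lemma pd_neg : pd μ (fun q => -f q) p = -pd μ f p := by
  simp [pd, fderiv_neg]

lemma pd_mul (hf : DifferentiableAt ℝ f p) (hg : DifferentiableAt ℝ g p) :
    pd μ (fun q => f q * g q) p = pd μ f p * g p + f p * pd μ g p := by
  simp [pd, fderiv_fun_mul hf hg]; ring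

lemma pd_const_mul (hf : DifferentiableAt ℝ f p) :
    pd μ (fun q => c * f q) p = c * pd μ f p := by
  simp [pd, fderiv_const_mul hf]

lemma pd_sum {ι : Type*} {s : Finset ι} {F : ι → (Fin n → ℝ) → ℝ}
    (hF : ∀ i ∈ s, DifferentiableAt ℝ (F i) p) :
    pd μ (fun q => ∑ i ∈ s, F i q) p = ∑ i ∈ s, pd μ (F i) p := by
  simp [pd, fderiv_fun_sum hF]

lemma contDiff_pd (hf : ContDiff ℝ (⊤ : ℕ∞) f) : ContDiff ℝ (⊤ : ℕ∞) (pd μ f) :=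
  (hf.fderiv_right le_rfl).clm_apply contDiff_const

lemma diff_pd (hf : ContDiff ℝ (⊤ : ℕ∞) f) : DifferentiableAt ℝ (pd μ f) p :=
  ((contDiff_pd hf).differentiable (by simp)).differentiableAt

lemma pd_comm (hf : ContDiff ℝ (⊤ : ℕ∞) f) : pd μ (pd ν f) p = pd ν (pd μ f) p := by
  have hdiff : Differentiable ℝ f := hf.differentiable (by simp)
  have h2 : DifferentiableAt ℝ (fderiv ℝ f) p :=
    ((hf.fderiv_right (m := (⊤ : ℕ∞)) le_rfl).differentiable (by simp)).differentiableAt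
  have key : ∀ (κ : Fin n) (v : Fin n → ℝ),
      pd κ (fun q => fderiv ℝ f q v) p = (fderiv ℝ (fderiv ℝ f) p) (Pi.single κ 1) v := by
    intro κ v
    have e : (fun q => fderiv ℝ f q v)
        = fun q => (ContinuousLinearMap.apply ℝ ℝ v) (fderiv ℝ f q) := rfl
    rw [pd, e, fderiv_comp' p (ContinuousLinearMap.apply ℝ ℝ v).differentiableAt h2]
    simp [ContinuousLinearMap.fderiv]
  have symm := second_derivative_symmetric (f' := fderiv ℝ f)
    (fun y => (hdiff y).hasFDerivAt) h2.hasFDerivAt (Pi.single μ 1) (Pi.single ν 1)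
  calc pd μ (pd ν f) p = (fderiv ℝ (fderiv ℝ f) p) (Pi.single μ 1) (Pi.single ν 1) :=
        key μ _
    _ = (fderiv ℝ (fderiv ℝ f) p) (Pi.single ν 1) (Pi.single μ 1) := symm
    _ = pd ν (pd μ f) p := (key ν _).symm

/-! ### index lemmas -/

variable {m : ℕ}

@[simp] lemma tIdx_ne_zero (a : Fin m) : tIdx a ≠ 0 := by
  simp [tIdx, Fin.ext_iff]
@[simp] lemma tIdx_ne_one (a : Fin m) : tIdx a ≠ 1 := by
  simp [tIdx, Fin.ext_iff]
@[simp] lemma zero_ne_tIdx (a : Fin m) : (0 : Fin (m+2)) ≠ tIdx a := by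
  simp [tIdx, Fin.ext_iff]
@[simp] lemma one_ne_tIdx (a : Fin m) : (1 : Fin (m+2)) ≠ tIdx a := by
  simp [tIdx, Fin.ext_iff]
@[simp] lemma fin_zero_ne_one : (0 : Fin (m+2)) ≠ 1 := by
  simp [Fin.ext_iff]
@[simp] lemma fin_one_ne_zero : (1 : Fin (m+2)) ≠ 0 := by
  simp [Fin.ext_iff]
@[simp] lemma tIdx_inj {a b : Fin m} : tIdx a = tIdx b ↔ a = b := by
  simp [tIdx, Fin.ext_iff]

lemma fin_cases3 (α : Fin (m+2)) : α = 0 ∨ α = 1 ∨ ∃ a : Fin m, α = tIdx a := by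
  rcases α with ⟨v, hv⟩
  match v with
  | 0 => left; rfl
  | 1 => right; left; rfl
  | (k+2) => right; right; exact ⟨⟨k, by omega⟩, by simp [tIdx, Fin.ext_iff]⟩

lemma sum_split (f : Fin (m+2) → ℝ) : ∑ δ, f δ = f 0 + f 1 + ∑ a : Fin m, f (tIdx a) := by
  rw [Fin.sum_univ_succ, Fin.sum_univ_succ, Fin.succ_zero_eq_one]
  simp [tIdx, add_assoc]

lemma dsum_eval (f : Fin m → Fin m → ℝ) (a₀ b₀ : Fin m) :
    (∑ a : Fin m, ∑ b : Fin m, if tIdx a₀ = tIdx a ∧ tIdx b₀ = tIdx b then f a b else 0)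
      = f a₀ b₀ := by
  simp only [tIdx_inj]
  have inner : ∀ a, (∑ b : Fin m, if a₀ = a ∧ b₀ = b then f a b else 0)
      = if a₀ = a then f a b₀ else 0 := by
    intro a
    by_cases hA : a₀ = a
    · simp [hA, Finset.sum_ite_eq]
    · simp [hA]
  simp only [inner, Finset.sum_ite_eq, Finset.mem_univ, if_true]

/-! ### metric components -/

variable {η ηinv : Matrix (Fin m) (Fin m) ℝ} {h : (Fin (m + 2) → ℝ) → ℝ}
  {p : Fin (m + 2) → ℝ}

@[simp] lemma gUp_00 : gUp m ηinv h p 0 0 = -(2 * h p) := by simp [gUp]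
@[simp] lemma gUp_01 : gUp m ηinv h p 0 1 = 1 := by simp [gUp]
@[simp] lemma gUp_10 : gUp m ηinv h p 1 0 = 1 := by simp [gUp]
@[simp] lemma gUp_11 : gUp m ηinv h p 1 1 = 0 := by simp [gUp]
@[simp] lemma gUp_0t (a : Fin m) : gUp m ηinv h p 0 (tIdx a) = 0 := by simp [gUp]
@[simp] lemma gUp_t0 (a : Fin m) : gUp m ηinv h p (tIdx a) 0 = 0 := by simp [gUp]
@[simp] lemma gUp_1t (a : Fin m) : gUp m ηinv h p 1 (tIdx a) = 0 := by simp [gUp]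
@[simp] lemma gUp_t1 (a : Fin m) : gUp m ηinv h p (tIdx a) 1 = 0 := by simp [gUp]
@[simp] lemma gUp_tt (a b : Fin m) : gUp m ηinv h p (tIdx a) (tIdx b) = ηinv a b := by
  rw [gUp, dsum_eval (fun a b => ηinv a b) a b]; simp

lemma gUp_row1 (α : Fin (m+2)) : gUp m ηinv h p α 1 = if α = 0 then 1 else 0 := by
  rcases fin_cases3 α with rfl | rfl | ⟨a, rfl⟩ <;> simp

lemma pd_gLow (hh : ContDiff ℝ (⊤ : ℕ∞) h) (μ δ γ : Fin (m+2)) :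
    pd μ (fun q => gLow m η h q δ γ) p = if δ = 1 ∧ γ = 1 then 2 * pd μ h p else 0 := by
  by_cases hc : δ = 1 ∧ γ = 1
  · obtain ⟨h1, h2⟩ := hc
    subst h1 h2
    have e : (fun q => gLow m η h q 1 1) = fun q => 2 * h q := by
      funext q; simp [gLow]
    rw [e, if_pos ⟨rfl, rfl⟩, pd_const_mul (hh.differentiable (by simp)).differentiableAt]
  · have e : (fun q => gLow m η h q δ γ) = fun _ => gLow m η h p δ γ := by
      funext q; simp [gLow, hc]
    rw [e, if_neg hc, pd_const]

/-! ### Christoffel symbols -/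

lemma chr_eq (hh : ContDiff ℝ (⊤ : ℕ∞) h) (α β γ : Fin (m+2)) :
    chr m η ηinv h p α β γ =
      (if α = 0 then (if γ = 1 then pd β h p else 0) + (if β = 1 then pd γ h p else 0)
        else 0)
      - (if β = 1 ∧ γ = 1 then ∑ δ, gUp m ηinv h p α δ * pd δ h p else 0) := by
  rw [chr]
  simp only [pd_gLow hh]
  by_cases hβ : β = 1 <;> by_cases hγ : γ = 1 <;>
    simp only [hβ, hγ, eq_self_iff_true, if_true, and_true, true_and, and_false,
      false_and, if_false, ite_true, ite_false, and_self]
  · -- β = 1, γ = 1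
    have e : ∀ δ : Fin (m+2), gUp m ηinv h p α δ *
        ((if δ = 1 then 2 * pd 1 h p else 0) + (if δ = 1 then 2 * pd 1 h p else 0)
          - 2 * pd δ h p)
        = (if δ = 1 then gUp m ηinv h p α δ * (4 * pd 1 h p) else 0)
          - 2 * (gUp m ηinv h p α δ * pd δ h p) := by
      intro δ; split_ifs <;> ring
    rw [Finset.sum_congr rfl (fun δ _ => e δ), Finset.sum_sub_distrib,
      Finset.sum_ite_eq' Finset.univ (1 : Fin (m+2)), ← Finset.mul_sum, gUp_row1]
    simp only [Finset.mem_univ, if_true]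
    split_ifs <;> ring
  · -- β = 1, γ ≠ 1
    have e : ∀ δ : Fin (m+2), gUp m ηinv h p α δ *
        (0 + (if δ = 1 then 2 * pd γ h p else 0) - 0)
        = (if δ = 1 then gUp m ηinv h p α δ * (2 * pd γ h p) else 0) := by
      intro δ; split_ifs <;> ring
    rw [Finset.sum_congr rfl (fun δ _ => e δ),
      Finset.sum_ite_eq' Finset.univ (1 : Fin (m+2)), gUp_row1]
    simp only [Finset.mem_univ, if_true]
    split_ifs <;> ring
  · -- β ≠ 1, γ = 1
    have e : ∀ δ : Fin (m+2), gUp m ηinv h p α δ *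
        ((if δ = 1 then 2 * pd β h p else 0) + 0 - 0)
        = (if δ = 1 then gUp m ηinv h p α δ * (2 * pd β h p) else 0) := by
      intro δ; split_ifs <;> ring
    rw [Finset.sum_congr rfl (fun δ _ => e δ),
      Finset.sum_ite_eq' Finset.univ (1 : Fin (m+2)), gUp_row1]
    simp only [Finset.mem_univ, if_true]
    split_ifs <;> ring
  · simp

lemma S0 : (∑ δ, gUp m ηinv h p 0 δ * pd δ h p) = pd 1 h p - 2 * h p * pd 0 h p := by
  rw [sum_split]; simp; ring

lemma S1 : (∑ δ, gUp m ηinv h p 1 δ * pd δ h p) = pd 0 h p := by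
  rw [sum_split]; simp

lemma St (c : Fin m) : (∑ δ, gUp m ηinv h p (tIdx c) δ * pd δ h p)
    = ∑ b, ηinv c b * pd (tIdx b) h p := by
  rw [sum_split]; simp

lemma chr0 (hh : ContDiff ℝ (⊤ : ℕ∞) h) (β γ : Fin (m+2)) :
    chr m η ηinv h p 0 β γ =
      (if γ = 1 then pd β h p else 0) + (if β = 1 then pd γ h p else 0)
        - (if β = 1 ∧ γ = 1 then pd 1 h p - 2 * h p * pd 0 h p else 0) := by
  rw [chr_eq hh]
  by_cases hc : β = 1 ∧ γ = 1 <;> simp [hc, S0]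

lemma chr1 (hh : ContDiff ℝ (⊤ : ℕ∞) h) (β γ : Fin (m+2)) :
    chr m η ηinv h p 1 β γ = if β = 1 ∧ γ = 1 then -(pd 0 h p) else 0 := by
  rw [chr_eq hh]
  by_cases hc : β = 1 ∧ γ = 1 <;> simp [hc, S1]

lemma chrT (hh : ContDiff ℝ (⊤ : ℕ∞) h) (c : Fin m) (β γ : Fin (m+2)) :
    chr m η ηinv h p (tIdx c) β γ =
      if β = 1 ∧ γ = 1 then -∑ b, ηinv c b * pd (tIdx b) h p else 0 := by
  rw [chr_eq hh]
  by_cases hc : β = 1 ∧ γ = 1 <;> simp [hc, St]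

variable (η) in
lemma riem_0 (hh : ContDiff ℝ (⊤ : ℕ∞) h) (β δ : Fin (m+2)) :
    riem m η ηinv h p 0 β 0 δ =
      (if δ = 1 then pd 0 (pd β h) p else 0)
      - (if β = 1 ∧ δ = 1 then pd 0 (pd 1 h) p - 2 * h p * pd 0 (pd 0 h) p else 0) := by
  have dh : DifferentiableAt ℝ h p := (hh.differentiable (by simp)).differentiableAt
  rw [riem]
  by_cases hβ : β = 1 <;> by_cases hδ : δ = 1
  · subst hβ hδ
    have e1 : (fun q => chr m η ηinv h q 0 1 1) = fun q => pd 1 h q + 2 * (h q * pd 0 h q) := by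
      funext q; rw [chr0 hh]; simp; ring
    have e2 : (fun q => chr m η ηinv h q 0 0 1) = fun q => pd 0 h q := by
      funext q; rw [chr0 hh]; simp
    have hs : (∑ ε : Fin (m+2), (chr m η ηinv h p 0 0 ε * chr m η ηinv h p ε 1 1
        - chr m η ηinv h p 0 1 ε * chr m η ηinv h p ε 0 1))
        = -(2 * (pd 0 h p * pd 0 h p)) := by
      rw [sum_split]; simp [chr0 hh, chr1 hh, chrT hh]; ring
    rw [e1, e2, hs, pd_add (diff_pd hh) ((dh.fun_mul (diff_pd hh)).const_mul 2),
      pd_const_mul (dh.fun_mul (diff_pd hh)), pd_mul dh (diff_pd hh),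
      pd_comm hh (μ := (1 : Fin (m+2))) (ν := (0 : Fin (m+2)))]
    simp; ring
  · subst hβ
    have e1 : (fun q => chr m η ηinv h q 0 δ 1) = fun q => pd δ h q := by
      funext q; rw [chr0 hh]; simp [hδ]
    have e2 : (fun q => chr m η ηinv h q 0 0 1) = fun q => pd 0 h q := by
      funext q; rw [chr0 hh]; simp
    have hs : (∑ ε : Fin (m+2), (chr m η ηinv h p 0 0 ε * chr m η ηinv h p ε δ 1
        - chr m η ηinv h p 0 δ ε * chr m η ηinv h p ε 0 1)) = 0 := by
      rw [sum_split]; simp [chr0 hh, chr1 hh, chrT hh, hδ]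
    rw [e1, e2, hs, pd_comm hh (μ := δ) (ν := (0 : Fin (m+2)))]
    simp [hδ]
  · subst hδ
    have e1 : (fun q => chr m η ηinv h q 0 1 β) = fun q => pd β h q := by
      funext q; rw [chr0 hh]; simp [hβ]
    have e2 : (fun q => chr m η ηinv h q 0 0 β) = fun _ => (0:ℝ) := by
      funext q; rw [chr0 hh]; simp [hβ]
    have hs : (∑ ε : Fin (m+2), (chr m η ηinv h p 0 0 ε * chr m η ηinv h p ε 1 β
        - chr m η ηinv h p 0 1 ε * chr m η ηinv h p ε 0 β)) = 0 := by
      rw [sum_split]; simp [chr0 hh, chr1 hh, chrT hh, hβ]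
    rw [e1, e2, hs, pd_const]
    simp [hβ]
  · have e1 : (fun q => chr m η ηinv h q 0 δ β) = fun _ => (0:ℝ) := by
      funext q; rw [chr0 hh]; simp [hβ, hδ]
    have e2 : (fun q => chr m η ηinv h q 0 0 β) = fun _ => (0:ℝ) := by
      funext q; rw [chr0 hh]; simp [hβ]
    have hs : (∑ ε : Fin (m+2), (chr m η ηinv h p 0 0 ε * chr m η ηinv h p ε δ β
        - chr m η ηinv h p 0 δ ε * chr m η ηinv h p ε 0 β)) = 0 := by
      rw [sum_split]; simp [chr0 hh, chr1 hh, chrT hh, hβ, hδ]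
    rw [e1, e2, hs, pd_const, pd_const]
    simp [hβ, hδ]

lemma riem_1 (hh : ContDiff ℝ (⊤ : ℕ∞) h) (β δ : Fin (m+2)) :
    riem m η ηinv h p 1 β 1 δ =
      (if β = 1 then pd 0 (pd δ h) p else 0)
      - (if β = 1 ∧ δ = 1 then pd 0 (pd 1 h) p else 0) := by
  rw [riem]
  by_cases hβ : β = 1 <;> by_cases hδ : δ = 1
  · subst hβ hδ
    have e1 : (fun q => chr m η ηinv h q 1 1 1) = fun q => -(pd 0 h q) := by
      funext q; rw [chr1 hh]; simp
    have hs : (∑ ε : Fin (m+2), (chr m η ηinv h p 1 1 ε * chr m η ηinv h p ε 1 1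
        - chr m η ηinv h p 1 1 ε * chr m η ηinv h p ε 1 1)) = 0 := by
      simp
    rw [e1, hs]
    simp
  · subst hβ
    have e1 : (fun q => chr m η ηinv h q 1 δ 1) = fun _ => (0:ℝ) := by
      funext q; rw [chr1 hh]; simp [hδ]
    have e2 : (fun q => chr m η ηinv h q 1 1 1) = fun q => -(pd 0 h q) := by
      funext q; rw [chr1 hh]; simp
    have hs : (∑ ε : Fin (m+2), (chr m η ηinv h p 1 1 ε * chr m η ηinv h p ε δ 1
        - chr m η ηinv h p 1 δ ε * chr m η ηinv h p ε 1 1)) = 0 := by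
      rw [sum_split]; simp [chr0 hh, chr1 hh, chrT hh, hδ]
    rw [e1, e2, hs, pd_const, pd_neg, pd_comm hh (μ := δ) (ν := (0 : Fin (m+2)))]
    simp [hδ]
  · subst hδ
    have e1 : (fun q => chr m η ηinv h q 1 1 β) = fun _ => (0:ℝ) := by
      funext q; rw [chr1 hh]; simp [hβ]
    have hs : (∑ ε : Fin (m+2), (chr m η ηinv h p 1 1 ε * chr m η ηinv h p ε 1 β
        - chr m η ηinv h p 1 1 ε * chr m η ηinv h p ε 1 β)) = 0 := by
      simp
    rw [e1, hs, pd_const]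
    simp [hβ]
  · have e1 : (fun q => chr m η ηinv h q 1 δ β) = fun _ => (0:ℝ) := by
      funext q; rw [chr1 hh]; simp [hβ]
    have e2 : (fun q => chr m η ηinv h q 1 1 β) = fun _ => (0:ℝ) := by
      funext q; rw [chr1 hh]; simp [hβ]
    have hs : (∑ ε : Fin (m+2), (chr m η ηinv h p 1 1 ε * chr m η ηinv h p ε δ β
        - chr m η ηinv h p 1 δ ε * chr m η ηinv h p ε 1 β)) = 0 := by
      rw [sum_split]; simp [chr0 hh, chr1 hh, chrT hh, hβ, hδ]
    rw [e1, e2, hs, pd_const, pd_const]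
    simp [hβ, hδ]

lemma riem_t (hh : ContDiff ℝ (⊤ : ℕ∞) h) (a : Fin m) (β δ : Fin (m+2)) :
    riem m η ηinv h p (tIdx a) β (tIdx a) δ =
      -(if β = 1 ∧ δ = 1 then ∑ b, ηinv a b * pd (tIdx a) (pd (tIdx b) h) p else 0) := by
  rw [riem]
  have e2 : (fun q => chr m η ηinv h q (tIdx a) (tIdx a) β) = fun _ => (0:ℝ) := by
    funext q; rw [chrT hh]; simp
  have hs : (∑ ε : Fin (m+2), (chr m η ηinv h p (tIdx a) (tIdx a) ε
      * chr m η ηinv h p ε δ β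
      - chr m η ηinv h p (tIdx a) δ ε * chr m η ηinv h p ε (tIdx a) β)) = 0 := by
    rw [sum_split]; simp [chr0 hh, chr1 hh, chrT hh]
  by_cases hc : δ = 1 ∧ β = 1
  · obtain ⟨h1, h2⟩ := hc
    subst h1 h2
    have e1 : (fun q => chr m η ηinv h q (tIdx a) 1 1)
        = fun q => -(∑ b, ηinv a b * pd (tIdx b) h q) := by
      funext q; rw [chrT hh]; simp
    rw [e1, e2, hs, pd_const, pd_neg,
      pd_sum (fun b _ => (diff_pd hh).const_mul (ηinv a b))]
    rw [Finset.sum_congr rfl (fun b _ => pd_const_mul (diff_pd hh))]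
    simp
  · have e1 : (fun q => chr m η ηinv h q (tIdx a) δ β) = fun _ => (0:ℝ) := by
      funext q; rw [chrT hh]; simp [hc]
    rw [e1, e2, hs, pd_const, pd_const]
    have : ¬(β = 1 ∧ δ = 1) := fun ⟨x, y⟩ => hc ⟨y, x⟩
    simp [this]

end PP

/-- the components of the Ricci tensor of the plane-fronted metric:
`R_{01} = R_{10} = ∂_0∂_0 h`, `R_{1a} = R_{a1} = ∂_0∂_a h`,
`R_{11} = 2h ∂_0∂_0 h − Σ η^{ab} ∂_a∂_b h`, and all other components vanish. -/
theorem stmt5 (m : ℕ) (hm : 1 ≤ m) (η ηinv : Matrix (Fin m) (Fin m) ℝ)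
    (hηsymm : η.IsSymm) (hη : η * ηinv = 1) (hη' : ηinv * η = 1)
    (h : (Fin (m + 2) → ℝ) → ℝ) (hh : ContDiff ℝ (⊤ : ℕ∞) h) :
    ∀ p : Fin (m + 2) → ℝ,
      ricci m η ηinv h p 0 1 = pd (0 : Fin (m + 2)) (pd (0 : Fin (m + 2)) h) p
      ∧ ricci m η ηinv h p 1 0 = pd (0 : Fin (m + 2)) (pd (0 : Fin (m + 2)) h) p
      ∧ (∀ a : Fin m,
          ricci m η ηinv h p 1 (tIdx a) = pd (0 : Fin (m + 2)) (pd (tIdx a) h) p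
          ∧ ricci m η ηinv h p (tIdx a) 1 = pd (0 : Fin (m + 2)) (pd (tIdx a) h) p)
      ∧ ricci m η ηinv h p 1 1 =
          2 * h p * pd (0 : Fin (m + 2)) (pd (0 : Fin (m + 2)) h) p
            - ∑ a : Fin m, ∑ b : Fin m, ηinv a b * pd (tIdx a) (pd (tIdx b) h) p
      ∧ ricci m η ηinv h p 0 0 = 0
      ∧ (∀ a : Fin m,
          ricci m η ηinv h p 0 (tIdx a) = 0 ∧ ricci m η ηinv h p (tIdx a) 0 = 0)
      ∧ (∀ a b : Fin m, ricci m η ηinv h p (tIdx a) (tIdx b) = 0) := by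
  intro p
  have hcalc : ∀ β δ : Fin (m+2), ricci m η ηinv h p β δ =
      riem m η ηinv h p 0 β 0 δ + riem m η ηinv h p 1 β 1 δ
        + ∑ a : Fin m, riem m η ηinv h p (tIdx a) β (tIdx a) δ := fun β δ => by
    rw [ricci, PP.sum_split]
  have key : ∀ β δ : Fin (m+2), ricci m η ηinv h p β δ =
      ((if δ = 1 then pd 0 (pd β h) p else 0)
        - (if β = 1 ∧ δ = 1 then pd 0 (pd 1 h) p - 2 * h p * pd 0 (pd 0 h) p else 0))
      + ((if β = 1 then pd 0 (pd δ h) p else 0)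
        - (if β = 1 ∧ δ = 1 then pd 0 (pd 1 h) p else 0))
      + ∑ a : Fin m, -(if β = 1 ∧ δ = 1
          then ∑ b, ηinv a b * pd (tIdx a) (pd (tIdx b) h) p else 0) := by
    intro β δ
    rw [hcalc, PP.riem_0 η hh, PP.riem_1 hh,
      Finset.sum_congr rfl (fun a _ => PP.riem_t hh a β δ)]
  refine ⟨?_, ?_, fun a => ⟨?_, ?_⟩, ?_, ?_, fun a => ⟨?_, ?_⟩, fun a b => ?_⟩ <;>
    rw [key] <;> simp
  ring
end
end

section
/- The plane-fronted metric is Ricci flat (all components of the Ricci tensor vanish identically on ℝ^n) if and only if there exist a smooth function L : ℝ → ℝ and a smooth function G : ℝ × ℝ^m → ℝ such that h(u, v, x) = L(v)·u + G(v, x) for all (u,v,x) ∈ ℝ^n and G satisfies the transverse Laplace-type equation Σ_{a,b} η^{ab} ∂_a∂_b G = 0 identically. -/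
noncomputable section

namespace Stmt10Aux

open Finset

lemma zero_ne_one' {m : ℕ} : (0 : Fin (m+2)) ≠ 1 := by
  simp [Fin.ext_iff]

lemma tIdx_ne_zero {m : ℕ} (a : Fin m) : tIdx a ≠ 0 := by
  simp [tIdx, Fin.ext_iff, Fin.val_succ]

lemma tIdx_ne_one {m : ℕ} (a : Fin m) : tIdx a ≠ 1 := by
  simp [tIdx, Fin.ext_iff, Fin.val_succ]

lemma tIdx_inj {m : ℕ} {a b : Fin m} (hab : tIdx a = tIdx b) : a = b := by
  simpa [tIdx, Fin.ext_iff, Fin.val_succ] using hab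

lemma tIdx_eq_iff {m : ℕ} {a b : Fin m} : tIdx a = tIdx b ↔ a = b :=
  ⟨tIdx_inj, by rintro rfl; rfl⟩

lemma idx_cases {m : ℕ} (i : Fin (m+2)) : i = 0 ∨ i = 1 ∨ ∃ a : Fin m, i = tIdx a := by
  refine Fin.cases ?_ (fun j => ?_) i
  · exact Or.inl rfl
  · refine Fin.cases ?_ (fun a => ?_) j
    · exact Or.inr (Or.inl (Fin.succ_zero_eq_one))
    · exact Or.inr (Or.inr ⟨a, rfl⟩)

lemma sum_fin {m : ℕ} (f : Fin (m+2) → ℝ) :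
    ∑ i, f i = f 0 + f 1 + ∑ a : Fin m, f (tIdx a) := by
  rw [Fin.sum_univ_succ, Fin.sum_univ_succ, Fin.succ_zero_eq_one]
  simp [tIdx, add_assoc]

/-! ### pd calculus -/

lemma pd_congr {n : ℕ} (μ : Fin n) {f g : (Fin n → ℝ) → ℝ} (hfg : ∀ q, f q = g q)
    (p : Fin n → ℝ) : pd μ f p = pd μ g p := by
  have : f = g := funext hfg
  rw [this]

lemma pd_const {n : ℕ} (μ : Fin n) (c : ℝ) (p : Fin n → ℝ) : pd μ (fun _ => c) p = 0 := by
  simp [pd]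

lemma pd_zero {n : ℕ} (μ : Fin n) (p : Fin n → ℝ) : pd μ (fun _ => (0:ℝ)) p = 0 :=
  pd_const μ 0 p

lemma pd_add {n : ℕ} (μ : Fin n) {f g : (Fin n → ℝ) → ℝ} (hf : Differentiable ℝ f)
    (hg : Differentiable ℝ g) (p : Fin n → ℝ) :
    pd μ (fun q => f q + g q) p = pd μ f p + pd μ g p := by
  have H : HasFDerivAt (fun q => f q + g q) (fderiv ℝ f p + fderiv ℝ g p) p :=
    (hf p).hasFDerivAt.add (hg p).hasFDerivAt
  simp [pd, H.fderiv]

lemma pd_neg {n : ℕ} (μ : Fin n) (f : (Fin n → ℝ) → ℝ) (p : Fin n → ℝ) :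
    pd μ (fun q => -f q) p = -pd μ f p := by
  simp [pd, fderiv_neg]

lemma pd_sub {n : ℕ} (μ : Fin n) {f g : (Fin n → ℝ) → ℝ} (hf : Differentiable ℝ f)
    (hg : Differentiable ℝ g) (p : Fin n → ℝ) :
    pd μ (fun q => f q - g q) p = pd μ f p - pd μ g p := by
  have H : HasFDerivAt (fun q => f q - g q) (fderiv ℝ f p - fderiv ℝ g p) p :=
    (hf p).hasFDerivAt.sub (hg p).hasFDerivAt
  simp [pd, H.fderiv]

lemma pd_mul {n : ℕ} (μ : Fin n) {f g : (Fin n → ℝ) → ℝ} (hf : Differentiable ℝ f)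
    (hg : Differentiable ℝ g) (p : Fin n → ℝ) :
    pd μ (fun q => f q * g q) p = f p * pd μ g p + g p * pd μ f p := by
  have H : HasFDerivAt (fun q => f q * g q) (f p • fderiv ℝ g p + g p • fderiv ℝ f p) p :=
    (hf p).hasFDerivAt.mul (hg p).hasFDerivAt
  simp [pd, H.fderiv]

lemma pd_cmul {n : ℕ} (μ : Fin n) (c : ℝ) {f : (Fin n → ℝ) → ℝ} (hf : Differentiable ℝ f)
    (p : Fin n → ℝ) : pd μ (fun q => c * f q) p = c * pd μ f p := by
  simp [pd, fderiv_const_mul (hf p) c]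

lemma pd_sum {n : ℕ} (μ : Fin n) {ι : Type*} (s : Finset ι) (f : ι → (Fin n → ℝ) → ℝ)
    (hf : ∀ i ∈ s, Differentiable ℝ (f i)) (p : Fin n → ℝ) :
    pd μ (fun q => ∑ i ∈ s, f i q) p = ∑ i ∈ s, pd μ (f i) p := by
  have H := HasFDerivAt.fun_sum (u := s) (fun i hi => (hf i hi p).hasFDerivAt)
  simp [pd, H.fderiv]

lemma pd_ite {n : ℕ} (μ : Fin n) (P : Prop) [Decidable P] (f g : (Fin n → ℝ) → ℝ)
    (p : Fin n → ℝ) :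
    pd μ (fun q => if P then f q else g q) p = if P then pd μ f p else pd μ g p := by
  split_ifs <;> rfl

lemma contDiff_pd {n : ℕ} {f : (Fin n → ℝ) → ℝ} (hf : ContDiff ℝ (⊤ : ℕ∞) f) (μ : Fin n) :
    ContDiff ℝ (⊤ : ℕ∞) (pd μ f) :=
  (hf.fderiv_right (by simp)).clm_apply contDiff_const

lemma pd_comm {n : ℕ} {f : (Fin n → ℝ) → ℝ} (hf : ContDiff ℝ (⊤ : ℕ∞) f) (μ ν : Fin n)
    (p : Fin n → ℝ) : pd μ (pd ν f) p = pd ν (pd μ f) p := by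
  have hsymm : IsSymmSndFDerivAt ℝ f p :=
    hf.contDiffAt.isSymmSndFDerivAt (by simp; exact WithTop.coe_le_coe.mpr le_top)
  have hdf : Differentiable ℝ (fderiv ℝ f) :=
    (hf.fderiv_right (m := 1) (WithTop.coe_le_coe.mpr le_top)).differentiable one_ne_zero
  have key : ∀ w v : Fin n → ℝ,
      fderiv ℝ (fun q => fderiv ℝ f q v) p w = fderiv ℝ (fderiv ℝ f) p w v := by
    intro w v
    rw [fderiv_clm_apply (hdf p) (differentiableAt_const v)]
    simp
  show fderiv ℝ (fun q => fderiv ℝ f q (Pi.single ν 1)) p (Pi.single μ 1)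
      = fderiv ℝ (fun q => fderiv ℝ f q (Pi.single μ 1)) p (Pi.single ν 1)
  rw [key, key]
  exact hsymm _ _

end Stmt10Aux
namespace Stmt10Aux

open Finset

@[simp] lemma zero_eq_tIdx_iff {m : ℕ} (a : Fin m) : ((0:Fin (m+2)) = tIdx a) ↔ False := by
  simp [(tIdx_ne_zero a).symm]

@[simp] lemma one_eq_tIdx_iff {m : ℕ} (a : Fin m) : ((1:Fin (m+2)) = tIdx a) ↔ False := by
  simp [(tIdx_ne_one a).symm]

@[simp] lemma tIdx_eq_zero_iff {m : ℕ} (a : Fin m) : (tIdx a = (0:Fin (m+2))) ↔ False := by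
  simp [tIdx_ne_zero a]

@[simp] lemma tIdx_eq_one_iff {m : ℕ} (a : Fin m) : (tIdx a = (1:Fin (m+2))) ↔ False := by
  simp [tIdx_ne_one a]

@[simp] lemma tIdx_eq_tIdx_iff {m : ℕ} (a b : Fin m) : (tIdx a = tIdx b) ↔ a = b :=
  tIdx_eq_iff

@[simp] lemma fin_zero_eq_one_iff {m : ℕ} : ((0:Fin (m+2)) = 1) ↔ False := by
  simp [zero_ne_one']

@[simp] lemma fin_one_eq_zero_iff {m : ℕ} : ((1:Fin (m+2)) = 0) ↔ False := by
  simp [zero_ne_one'.symm]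

section metric

variable {m : ℕ} (η ηinv : Matrix (Fin m) (Fin m) ℝ) (h : (Fin (m + 2) → ℝ) → ℝ)

@[simp] lemma gUp_00 (p) : gUp m ηinv h p 0 0 = -(2 * h p) := by simp [gUp]
@[simp] lemma gUp_01 (p) : gUp m ηinv h p 0 1 = 1 := by simp [gUp]
@[simp] lemma gUp_10 (p) : gUp m ηinv h p 1 0 = 1 := by simp [gUp]
@[simp] lemma gUp_11 (p) : gUp m ηinv h p 1 1 = 0 := by simp [gUp]
@[simp] lemma gUp_0t (p) (b : Fin m) : gUp m ηinv h p 0 (tIdx b) = 0 := by simp [gUp]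
@[simp] lemma gUp_1t (p) (b : Fin m) : gUp m ηinv h p 1 (tIdx b) = 0 := by simp [gUp]
@[simp] lemma gUp_t0 (p) (a : Fin m) : gUp m ηinv h p (tIdx a) 0 = 0 := by simp [gUp]
@[simp] lemma gUp_t1 (p) (a : Fin m) : gUp m ηinv h p (tIdx a) 1 = 0 := by simp [gUp]
@[simp] lemma gUp_tt (p) (a b : Fin m) : gUp m ηinv h p (tIdx a) (tIdx b) = ηinv a b := by
  simp [gUp, ite_and, Finset.sum_ite_eq]

lemma pd_gLow (hh : Differentiable ℝ h) (β δ γ : Fin (m+2)) (p) :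
    pd β (fun q => gLow m η h q δ γ) p = if δ = 1 ∧ γ = 1 then 2 * pd β h p else 0 := by
  by_cases hc : δ = 1 ∧ γ = 1
  · rw [if_pos hc]
    have he : ∀ q, gLow m η h q δ γ = (2 * h q) +
        ((if (δ = 0 ∧ γ = 1) ∨ (δ = 1 ∧ γ = 0) then 1 else 0)
          + ∑ a : Fin m, ∑ b : Fin m, if δ = tIdx a ∧ γ = tIdx b then η a b else 0) := by
      intro q; rw [gLow, if_pos hc]; ring
    rw [pd_congr β he, pd_add β (hh.const_mul 2) (differentiable_const _),
      pd_cmul β 2 hh, pd_const]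
    ring
  · rw [if_neg hc]
    have he : ∀ q, gLow m η h q δ γ =
        ((if (δ = 0 ∧ γ = 1) ∨ (δ = 1 ∧ γ = 0) then 1 else 0)
          + ∑ a : Fin m, ∑ b : Fin m, if δ = tIdx a ∧ γ = tIdx b then η a b else 0) := by
      intro q; rw [gLow, if_neg hc]; ring
    rw [pd_congr β he, pd_const]

/-- Explicit form of the Christoffel symbols. -/
def Γe (ηinv : Matrix (Fin m) (Fin m) ℝ) (h : (Fin (m + 2) → ℝ) → ℝ)
    (p : Fin (m+2) → ℝ) (α β γ : Fin (m+2)) : ℝ :=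
  (if α = 0 then ((if γ = 1 then pd β h p else 0) + (if β = 1 then pd γ h p else 0) +
      (if β = 1 ∧ γ = 1 then 2 * h p * pd 0 h p - pd 1 h p else 0)) else 0)
  + (if α = 1 ∧ β = 1 ∧ γ = 1 then -pd 0 h p else 0)
  + (if β = 1 ∧ γ = 1 then
      -∑ a : Fin m, ∑ b : Fin m, (if α = tIdx a then ηinv a b * pd (tIdx b) h p else 0)
     else 0)

lemma chr_eq (hh : Differentiable ℝ h) (p) (α β γ : Fin (m+2)) :
    chr m η ηinv h p α β γ = Γe ηinv h p α β γ := by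
  rw [chr]
  simp only [pd_gLow η h hh]
  rw [sum_fin]
  rcases idx_cases α with hα | hα | ⟨a₀, hα⟩ <;> subst hα <;>
    simp [Γe, Finset.mul_sum, Finset.sum_ite_eq', eq_comm (a := (0:Fin (m+2)))] <;>
    split_ifs <;>
    first
      | ring
      | (simp_all; try ring)
      | (rw [Finset.sum_comm]; apply Finset.sum_congr rfl; intros; split_ifs <;> ring)

end metric
end Stmt10Aux
namespace Stmt10Aux

open Finset

section ricci

variable {m : ℕ} (η ηinv : Matrix (Fin m) (Fin m) ℝ) {h : (Fin (m + 2) → ℝ) → ℝ}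

lemma pd_Γe0 (hh : ContDiff ℝ (⊤ : ℕ∞) h) (μ β γ : Fin (m+2)) (p) :
    pd μ (fun q => Γe ηinv h q 0 β γ) p =
      (if γ = 1 then pd μ (pd β h) p else 0)
      + (if β = 1 then pd μ (pd γ h) p else 0)
      + (if β = 1 ∧ γ = 1 then
          2 * h p * pd μ (pd 0 h) p + pd 0 h p * (2 * pd μ h p) - pd μ (pd 1 h) p
         else 0) := by
  have hd : Differentiable ℝ h := hh.differentiable (by simp)
  have hd1 : ∀ ν, Differentiable ℝ (pd ν h) := fun ν => (contDiff_pd hh ν).differentiable (by simp)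
  have hdβ := hd1 β; have hdγ := hd1 γ; have hd0 := hd1 0; have hd1' := hd1 1
  have he : ∀ q, Γe ηinv h q 0 β γ =
      (if γ = 1 then pd β h q else 0) + (if β = 1 then pd γ h q else 0)
        + (if β = 1 ∧ γ = 1 then 2 * h q * pd 0 h q - pd 1 h q else 0) := by
    intro q; simp [Γe]
  rw [pd_congr μ he]
  simp (disch := first | assumption | fun_prop | (split_ifs <;> fun_prop)) only
    [pd_add, pd_ite, pd_zero, pd_const, pd_neg, pd_cmul, pd_mul, pd_sub]

lemma pd_Γe1 (hh : ContDiff ℝ (⊤ : ℕ∞) h) (μ β γ : Fin (m+2)) (p) :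
    pd μ (fun q => Γe ηinv h q 1 β γ) p =
      (if β = 1 ∧ γ = 1 then -pd μ (pd 0 h) p else 0) := by
  have hd1 : ∀ ν, Differentiable ℝ (pd ν h) := fun ν => (contDiff_pd hh ν).differentiable (by simp)
  have hd0 := hd1 0
  have he : ∀ q, Γe ηinv h q 1 β γ =
      (if β = 1 ∧ γ = 1 then -pd 0 h q else 0) := by
    intro q; simp [Γe]
  rw [pd_congr μ he]
  simp (disch := first | assumption | fun_prop | (split_ifs <;> fun_prop)) only
    [pd_ite, pd_zero, pd_neg]

lemma pd_Γet (hh : ContDiff ℝ (⊤ : ℕ∞) h) (μ β γ : Fin (m+2)) (c : Fin m) (p) :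
    pd μ (fun q => Γe ηinv h q (tIdx c) β γ) p =
      (if β = 1 ∧ γ = 1 then
        -∑ b : Fin m, ηinv c b * pd μ (pd (tIdx b) h) p else 0) := by
  have hd1 : ∀ ν, Differentiable ℝ (pd ν h) := fun ν => (contDiff_pd hh ν).differentiable (by simp)
  have hsum : Differentiable ℝ (fun q => ∑ b : Fin m, ηinv c b * pd (tIdx b) h q) := by
    apply Differentiable.fun_sum
    intro b _
    exact (hd1 (tIdx b)).const_mul (ηinv c b)
  have he : ∀ q, Γe ηinv h q (tIdx c) β γ =
      (if β = 1 ∧ γ = 1 then -∑ b : Fin m, ηinv c b * pd (tIdx b) h q else 0) := by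
    intro q; simp [Γe, ite_and, Finset.sum_ite_eq]
  rw [pd_congr μ he]
  rw [pd_ite]
  rw [pd_neg, pd_sum μ univ _ (fun b _ => (hd1 (tIdx b)).const_mul (ηinv c b)), pd_zero]
  congr 1
  congr 1
  apply Finset.sum_congr rfl
  intro b _
  exact pd_cmul μ (ηinv c b) (hd1 (tIdx b)) p

lemma ricci_eq (hh : ContDiff ℝ (⊤ : ℕ∞) h) (p) (β δ : Fin (m+2)) :
    ricci m η ηinv h p β δ =
      (if δ = 1 then pd 0 (pd β h) p else 0) + (if β = 1 then pd 0 (pd δ h) p else 0)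
      + (if β = 1 ∧ δ = 1 then
          2 * h p * pd 0 (pd 0 h) p - pd 0 (pd 1 h) p - pd 1 (pd 0 h) p
            - ∑ a : Fin m, ∑ b : Fin m, ηinv a b * pd (tIdx a) (pd (tIdx b) h) p
         else 0) := by
  have hd : Differentiable ℝ h := hh.differentiable (by simp)
  have hc : ∀ (q : Fin (m+2) → ℝ) (α' β' γ' : Fin (m+2)),
      chr m η ηinv h q α' β' γ' = Γe ηinv h q α' β' γ' := fun q => chr_eq η ηinv h hd q
  rw [ricci]
  simp only [riem, hc]
  simp only [sum_fin]
  simp only [pd_Γe0 ηinv hh, pd_Γe1 ηinv hh, pd_Γet ηinv hh]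
  simp only [Γe]
  simp [ite_and, Finset.sum_ite_eq, Finset.mul_sum]
  split_ifs <;> first
    | ring
    | (simp_all; try ring)

end ricci
end Stmt10Aux
namespace Stmt10Aux

open Finset

lemma hasDerivAt_slice {n : ℕ} {f : (Fin n → ℝ) → ℝ} (hf : Differentiable ℝ f)
    (i : Fin n) (p : Fin n → ℝ) (s : ℝ) :
    HasDerivAt (fun s : ℝ => f (Function.update p i s)) (pd i f (Function.update p i s)) s := by
  have h1 : (fun s : ℝ => Function.update p i s)
      = fun s : ℝ => Function.update p i 0 + s • (Pi.single i 1 : Fin n → ℝ) := by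
    funext s j
    by_cases hj : j = i
    · subst hj; simp
    · simp [Function.update_of_ne hj, Pi.single_eq_of_ne hj]
  have h2 : HasDerivAt (fun s : ℝ => Function.update p i 0 + s • (Pi.single i 1 : Fin n → ℝ))
      (Pi.single i 1 : Fin n → ℝ) s := by
    simpa using ((hasDerivAt_id s).smul_const (Pi.single i (1:ℝ))).const_add
      (Function.update p i 0)
  have h2' : HasDerivAt (fun s : ℝ => Function.update p i s) (Pi.single i 1 : Fin n → ℝ) s := by
    rw [h1]; exact h2
  exact (hf (Function.update p i s)).hasFDerivAt.comp_hasDerivAt s h2'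

lemma const_along {n : ℕ} {f : (Fin n → ℝ) → ℝ} (hf : Differentiable ℝ f) (i : Fin n)
    (hi : ∀ p, pd i f p = 0) (p : Fin n → ℝ) (t : ℝ) :
    f (Function.update p i t) = f p := by
  have key : ∀ s : ℝ, HasDerivAt (fun s : ℝ => f (Function.update p i s)) 0 s := by
    intro s
    have := hasDerivAt_slice hf i p s
    rwa [hi] at this
  have hconst := is_const_of_deriv_eq_zero (fun s => (key s).differentiableAt)
    (fun s => (key s).deriv) t (p i)
  simpa [Function.update_eq_self] using hconst

lemma lin_u {n : ℕ} {f : (Fin n → ℝ) → ℝ} (hf : Differentiable ℝ f) (i : Fin n)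
    (hf' : Differentiable ℝ (pd i f)) (hii : ∀ p, pd i (pd i f) p = 0) (p : Fin n → ℝ) :
    f p = f (Function.update p i 0) + p i * pd i f p := by
  have hconst : ∀ s : ℝ, pd i f (Function.update p i s) = pd i f p := fun s =>
    const_along hf' i hii p s
  have key : ∀ s : ℝ, HasDerivAt
      (fun s : ℝ => f (Function.update p i s) - s * pd i f p) 0 s := by
    intro s
    have h1 := hasDerivAt_slice hf i p s
    rw [hconst] at h1
    have h2 : HasDerivAt (fun s : ℝ => f (Function.update p i s) - s * pd i f p)
        (pd i f p - pd i f p) s := h1.sub (hasDerivAt_mul_const (pd i f p))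
    simpa using h2
  have hconst2 := is_const_of_deriv_eq_zero (fun s => (key s).differentiableAt)
    (fun s => (key s).deriv) (p i) 0
  simp only [Function.update_eq_self, zero_mul, sub_zero] at hconst2
  linarith [hconst2]

lemma eq_of_pd_zero_on {n : ℕ} {f : (Fin n → ℝ) → ℝ} (hf : Differentiable ℝ f)
    (S : Finset (Fin n)) (hS : ∀ i ∈ S, ∀ p, pd i f p = 0) :
    ∀ q q' : Fin n → ℝ, (∀ i, i ∉ S → q i = q' i) → f q = f q' := by
  induction S using Finset.induction_on with
  | empty =>
    intro q q' hqq'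
    have : q = q' := funext fun i => hqq' i (Finset.notMem_empty i)
    rw [this]
  | @insert a s ha ih =>
    intro q q' hqq'
    have h1 : f (Function.update q a (q' a)) = f q :=
      const_along hf a (hS a (Finset.mem_insert_self a s)) q (q' a)
    rw [← h1]
    apply ih (fun i hi => hS i (Finset.mem_insert_of_mem hi))
    intro i hi
    by_cases hia : i = a
    · subst hia; simp
    · rw [Function.update_of_ne hia]
      exact hqq' i (fun hmem => by
        rcases Finset.mem_insert.1 hmem with h | h
        · exact hia h
        · exact hi h)

lemma pd_comp_affine {n : ℕ} {F : Type*} [NormedAddCommGroup F] [NormedSpace ℝ F]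
    {f : F → ℝ} (hf : Differentiable ℝ f) (A : (Fin n → ℝ) →L[ℝ] F) (c : F)
    (μ : Fin n) (x : Fin n → ℝ) :
    pd μ (fun y => f (c + A y)) x = fderiv ℝ f (c + A x) (A (Pi.single μ 1)) := by
  have h1 : HasFDerivAt (fun y : Fin n → ℝ => c + A y) (A : (Fin n → ℝ) →L[ℝ] F) x :=
    A.hasFDerivAt.const_add c
  have h2 : HasFDerivAt (fun y => f (c + A y)) ((fderiv ℝ f (c + A x)).comp A) x :=
    (hf (c + A x)).hasFDerivAt.comp x h1
  rw [pd, h2.fderiv]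
  rfl

lemma pd_comp_clm {n : ℕ} {F : Type*} [NormedAddCommGroup F] [NormedSpace ℝ F]
    {f : F → ℝ} (hf : Differentiable ℝ f) (A : (Fin n → ℝ) →L[ℝ] F)
    (μ : Fin n) (x : Fin n → ℝ) :
    pd μ (fun y => f (A y)) x = fderiv ℝ f (A x) (A (Pi.single μ 1)) := by
  have he : ∀ y, f (A y) = f ((0:F) + A y) := fun y => by rw [zero_add]
  rw [pd_congr μ he, pd_comp_affine hf A 0 μ x, zero_add]

end Stmt10Aux
namespace Stmt10Aux

open Finset ContinuousLinearMap

/-- Linear embedding `(v, x) ↦ (0, v, x)` of `ℝ × ℝ^m` into `ℝ^(m+2)`. -/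
def Bmap (m : ℕ) : (ℝ × (Fin m → ℝ)) →L[ℝ] (Fin (m+2) → ℝ) :=
  ContinuousLinearMap.pi (fun i => Fin.cases 0
    (fun j => Fin.cases (ContinuousLinearMap.fst ℝ ℝ (Fin m → ℝ))
      (fun a => (ContinuousLinearMap.proj a).comp (ContinuousLinearMap.snd ℝ ℝ (Fin m → ℝ))) j) i)

/-- Linear projection `p ↦ (p 1, (p (a+2))_a)`. -/
def phiMap (m : ℕ) : (Fin (m+2) → ℝ) →L[ℝ] (ℝ × (Fin m → ℝ)) :=
  (ContinuousLinearMap.proj 1).prod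
    (ContinuousLinearMap.pi (fun a => ContinuousLinearMap.proj (tIdx a)))

variable {m : ℕ}

@[simp] lemma Bmap_zero (w : ℝ × (Fin m → ℝ)) : Bmap m w 0 = 0 := by
  simp [Bmap]

@[simp] lemma Bmap_one (w : ℝ × (Fin m → ℝ)) : Bmap m w 1 = w.1 := by
  have h0 : Bmap m w (Fin.succ 0) = w.1 := by
    simp only [Bmap, ContinuousLinearMap.pi_apply, Fin.cases_succ, Fin.cases_zero]
    rfl
  simpa [Fin.succ_zero_eq_one] using h0

@[simp] lemma Bmap_t (w : ℝ × (Fin m → ℝ)) (a : Fin m) : Bmap m w (tIdx a) = w.2 a := by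
  simp [Bmap, tIdx]

@[simp] lemma phiMap_apply (p : Fin (m+2) → ℝ) :
    phiMap m p = (p 1, fun a => p (tIdx a)) := rfl

lemma Bmap_single (b : Fin m) :
    Bmap m (0, Pi.single b 1) = (Pi.single (tIdx b) 1 : Fin (m+2) → ℝ) := by
  funext i
  rcases idx_cases i with hi | hi | ⟨a, hi⟩ <;> subst hi <;>
    simp [Pi.single_apply, tIdx_eq_iff, eq_comm]

lemma phiMap_single_zero :
    phiMap m (Pi.single 0 1) = (0 : ℝ × (Fin m → ℝ)) := by
  ext
  · simp [Pi.single_apply]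
  · simp [Pi.single_apply]

lemma phiMap_single_t (b : Fin m) :
    phiMap m (Pi.single (tIdx b) 1) = ((0 : ℝ), Pi.single b 1) := by
  ext
  · simp [Pi.single_apply]
  · simp [Pi.single_apply, tIdx_eq_iff, eq_comm]

lemma pd_coord {n : ℕ} (μ ρ : Fin n) (x : Fin n → ℝ) :
    pd μ (fun q : Fin n → ℝ => q ρ) x = (Pi.single μ 1 : Fin n → ℝ) ρ := by
  have h1 : HasFDerivAt (fun q : Fin n → ℝ => q ρ)
      (ContinuousLinearMap.proj (R := ℝ) (φ := fun _ : Fin n => ℝ) ρ) x :=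
    hasFDerivAt_apply ρ x
  rw [pd, h1.fderiv]
  rfl

end Stmt10Aux
open Stmt10Aux ContinuousLinearMap in
/-- the plane-fronted metric is Ricci flat iff
`h(u,v,x) = L(v)·u + G(v,x)` with `G` satisfying the transverse Laplace-type
equation `Σ η^{ab} ∂_a∂_b G = 0`. -/
theorem stmt10 (m : ℕ) (hm : 1 ≤ m) (η ηinv : Matrix (Fin m) (Fin m) ℝ)
    (hηsymm : η.IsSymm) (hη : η * ηinv = 1) (hη' : ηinv * η = 1)
    (h : (Fin (m + 2) → ℝ) → ℝ) (hh : ContDiff ℝ (⊤ : ℕ∞) h) :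
    (∀ (p : Fin (m + 2) → ℝ) (β δ : Fin (m + 2)), ricci m η ηinv h p β δ = 0)
      ↔ (∃ (L : ℝ → ℝ) (G : ℝ × (Fin m → ℝ) → ℝ),
          ContDiff ℝ (⊤ : ℕ∞) L ∧ ContDiff ℝ (⊤ : ℕ∞) G
          ∧ (∀ p : Fin (m + 2) → ℝ,
              h p = L (p 1) * p 0 + G (p 1, fun a => p (tIdx a)))
          ∧ (∀ (v : ℝ) (x : Fin m → ℝ),
              ∑ a : Fin m, ∑ b : Fin m,
                ηinv a b * pd a (pd b (fun y => G (v, y))) x = 0)) := by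
  classical
  have hd : Differentiable ℝ h := hh.differentiable (by simp)
  have hd1 : ∀ ν : Fin (m+2), Differentiable ℝ (pd ν h) := fun ν =>
    (contDiff_pd hh ν).differentiable (by simp)
  have dproj : ∀ ρ : Fin (m+2), Differentiable ℝ (fun q : Fin (m+2) → ℝ => q ρ) :=
    fun ρ x => (hasFDerivAt_apply ρ x).differentiableAt
  constructor
  · -- forward direction
    intro hric
    have h00 : ∀ p, pd 0 (pd 0 h) p = 0 := by
      intro p
      have hr := hric p 1 0
      rw [ricci_eq η ηinv hh] at hr
      simpa using hr
    have h0t : ∀ (b : Fin m) (p : Fin (m+2) → ℝ), pd 0 (pd (tIdx b) h) p = 0 := by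
      intro b p
      have hr := hric p (tIdx b) 1
      rw [ricci_eq η ηinv hh] at hr
      simpa using hr
    have hlap : ∀ p, ∑ a : Fin m, ∑ b : Fin m,
        ηinv a b * pd (tIdx a) (pd (tIdx b) h) p = 0 := by
      intro p
      have hr := hric p 1 1
      rw [ricci_eq η ηinv hh] at hr
      rw [pd_comm hh 1 0 p] at hr
      simp [h00 p] at hr
      linarith
    refine ⟨fun v => pd 0 h (Pi.single 1 v), fun w => h (Bmap m w), ?_, ?_, ?_, ?_⟩
    · have hrw : (fun v : ℝ => pd 0 h (Pi.single 1 v))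
          = fun v : ℝ => pd 0 h (v • (Pi.single 1 1 : Fin (m+2) → ℝ)) := by
        funext v; congr 1; funext i
        simp [Pi.single_apply]
      rw [hrw]
      exact (contDiff_pd hh 0).comp (contDiff_id.smul contDiff_const)
    · exact hh.comp (Bmap m).contDiff
    · intro p
      have hupd := lin_u hd 0 (hd1 0) h00 p
      have hS : ∀ i ∈ insert (0 : Fin (m+2)) (Finset.image tIdx Finset.univ),
          ∀ q, pd i (pd 0 h) q = 0 := by
        intro i hi q
        rcases Finset.mem_insert.1 hi with hi0 | hit
        · subst hi0; exact h00 q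
        · obtain ⟨b, _, rfl⟩ := Finset.mem_image.1 hit
          rw [pd_comm hh (tIdx b) 0 q]
          exact h0t b q
      have hLp : pd 0 h p = pd 0 h (Pi.single 1 (p 1)) := by
        apply eq_of_pd_zero_on (hd1 0) _ hS
        intro i hi
        rcases idx_cases i with hi0 | hi1 | ⟨a, hia⟩
        · subst hi0; exact absurd (Finset.mem_insert_self 0 _) hi
        · subst hi1; simp
        · subst hia
          exact absurd (Finset.mem_insert_of_mem
            (Finset.mem_image.2 ⟨a, Finset.mem_univ a, rfl⟩)) hi
      have hup : Function.update p 0 0 = Bmap m (p 1, fun a => p (tIdx a)) := by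
        funext i
        rcases idx_cases i with hi | hi | ⟨a, hi⟩ <;> subst hi
        · simp
        · rw [Function.update_of_ne (by simp [Fin.ext_iff] : (1 : Fin (m+2)) ≠ 0)]
          simp
        · rw [Function.update_of_ne (tIdx_ne_zero a)]
          simp
      rw [hupd, hLp, hup]; ring
    · intro v x
      have key : ∀ (f : (Fin (m+2) → ℝ) → ℝ), Differentiable ℝ f → ∀ (b : Fin m)
          (x : Fin m → ℝ),
          pd b (fun y => f (Bmap m (v, y))) x = pd (tIdx b) f (Bmap m (v, x)) := by
        intro f hf b x
        have he : ∀ y, f (Bmap m (v, y))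
            = f (Bmap m (v, 0) + ((Bmap m).comp (inr ℝ ℝ (Fin m → ℝ))) y) := by
          intro y
          congr 1
          rw [ContinuousLinearMap.comp_apply, inr_apply, ← map_add, Prod.mk_add_mk,
            add_zero, zero_add]
        rw [pd_congr _ he, pd_comp_affine hf _ _ b x]
        have h1 : Bmap m (v, (0 : Fin m → ℝ))
            + ((Bmap m).comp (inr ℝ ℝ (Fin m → ℝ))) x = Bmap m (v, x) := by
          rw [ContinuousLinearMap.comp_apply, inr_apply, ← map_add, Prod.mk_add_mk,
            add_zero, zero_add]
        have h2 : ((Bmap m).comp (inr ℝ ℝ (Fin m → ℝ))) (Pi.single b 1)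
            = (Pi.single (tIdx b) 1 : Fin (m+2) → ℝ) := by
          rw [ContinuousLinearMap.comp_apply, inr_apply, Bmap_single]
        rw [h1, h2]
        rfl
      have e2 : ∀ (a b : Fin m) (x : Fin m → ℝ),
          pd a (pd b (fun y => h (Bmap m (v, y)))) x
            = pd (tIdx a) (pd (tIdx b) h) (Bmap m (v, x)) := by
        intro a b x
        rw [pd_congr a (key h hd b)]
        exact key (pd (tIdx b) h) (hd1 _) a x
      calc ∑ a : Fin m, ∑ b : Fin m,
            ηinv a b * pd a (pd b (fun y => h (Bmap m (v, y)))) x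
          = ∑ a : Fin m, ∑ b : Fin m,
            ηinv a b * pd (tIdx a) (pd (tIdx b) h) (Bmap m (v, x)) :=
            Finset.sum_congr rfl fun a _ => Finset.sum_congr rfl fun b _ => by rw [e2]
        _ = 0 := hlap _
  · -- backward direction
    rintro ⟨L, G, hL, hG, hdec, hGlap⟩
    have hLd : Differentiable ℝ L := hL.differentiable (by simp)
    have hGd : Differentiable ℝ G := hG.differentiable (by simp)
    have he : ∀ q : Fin (m+2) → ℝ, h q = L (q 1) * q 0 + G (phiMap m q) := by
      intro q; rw [hdec q]; rfl
    have dL1 : Differentiable ℝ (fun q : Fin (m+2) → ℝ => L (q 1)) := hLd.comp (dproj 1)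
    have dGφ : Differentiable ℝ (fun q => G (phiMap m q)) :=
      hGd.comp (phiMap m).differentiable
    have pdL : ∀ (μ : Fin (m+2)) (p : Fin (m+2) → ℝ), (Pi.single μ 1 : Fin (m+2) → ℝ) 1 = 0 →
        pd μ (fun q : Fin (m+2) → ℝ => L (q 1)) p = 0 := by
      intro μ p hμ
      refine (pd_comp_clm hLd (ContinuousLinearMap.proj 1) μ p).trans ?_
      have : (ContinuousLinearMap.proj (R := ℝ) (φ := fun _ : Fin (m+2) => ℝ) 1)
          (Pi.single μ 1) = 0 := hμ
      rw [this, map_zero]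
    have pdL0 : ∀ p, pd 0 (fun q : Fin (m+2) → ℝ => L (q 1)) p = 0 := fun p =>
      pdL 0 p (by simp [Pi.single_apply])
    have pdLt : ∀ (c : Fin m) p, pd (tIdx c) (fun q : Fin (m+2) → ℝ => L (q 1)) p = 0 :=
      fun c p => pdL (tIdx c) p (by simp [Pi.single_apply])
    have b1 : ∀ p, pd 0 h p = L (p 1) := by
      intro p
      rw [pd_congr 0 he, pd_add 0 (f := fun q => L (q 1) * q 0) (dL1.mul (dproj 0)) dGφ, pd_mul 0 dL1 (dproj 0)]
      have hGpart : pd 0 (fun q => G (phiMap m q)) p = 0 := by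
        refine (pd_comp_clm hGd (phiMap m) 0 p).trans ?_
        rw [phiMap_single_zero, map_zero]
      rw [hGpart, pdL0 p, pd_coord]
      simp
    have f1 : ∀ p, pd 0 (pd 0 h) p = 0 := fun p => (pd_congr 0 b1 p).trans (pdL0 p)
    have ftL : ∀ (c : Fin m) p, pd (tIdx c) (pd 0 h) p = 0 := fun c p =>
      (pd_congr _ b1 p).trans (pdLt c p)
    have f2 : ∀ (b : Fin m) p, pd 0 (pd (tIdx b) h) p = 0 := fun b p =>
      (pd_comm hh 0 (tIdx b) p).trans (ftL b p)
    set D : Fin m → (ℝ × (Fin m → ℝ)) → ℝ :=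
      fun b w => fderiv ℝ G w (0, Pi.single b 1) with hD
    have hDd : ∀ b, Differentiable ℝ (D b) := fun b =>
      ((hG.fderiv_right (m := 1) (WithTop.coe_le_coe.mpr le_top)).clm_apply contDiff_const).differentiable one_ne_zero
    have e1 : ∀ (b : Fin m) p, pd (tIdx b) h p = D b (phiMap m p) := by
      intro b p
      rw [pd_congr _ he, pd_add _ (f := fun q => L (q 1) * q 0) (dL1.mul (dproj 0)) dGφ, pd_mul _ dL1 (dproj 0)]
      have hGpart : pd (tIdx b) (fun q => G (phiMap m q)) p = D b (phiMap m p) := by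
        refine (pd_comp_clm hGd (phiMap m) (tIdx b) p).trans ?_
        rw [phiMap_single_t]
      rw [hGpart, pdLt b p, pd_coord]
      simp [Pi.single_apply, (tIdx_ne_zero b)]
    have e2 : ∀ (a b : Fin m) p, pd (tIdx a) (pd (tIdx b) h) p
        = fderiv ℝ (D b) (phiMap m p) (0, Pi.single a 1) := by
      intro a b p
      rw [pd_congr _ (e1 b)]
      refine (pd_comp_clm (hDd b) (phiMap m) (tIdx a) p).trans ?_
      rw [phiMap_single_t]
    have hey : ∀ (f : ℝ × (Fin m → ℝ) → ℝ), Differentiable ℝ f → ∀ (v : ℝ) (c : Fin m)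
        (x : Fin m → ℝ),
        pd c (fun y => f (v, y)) x = fderiv ℝ f (v, x) ((0:ℝ), Pi.single c 1) := by
      intro f hf v c x
      have he' : ∀ y, f (v, y) = f ((v, (0 : Fin m → ℝ)) + (inr ℝ ℝ (Fin m → ℝ)) y) := by
        intro y
        rw [inr_apply, Prod.mk_add_mk, add_zero, zero_add]
      rw [pd_congr _ he', pd_comp_affine hf _ _ c x, inr_apply, inr_apply, Prod.mk_add_mk,
        add_zero, zero_add]
    have e3 : ∀ (a b : Fin m) (v : ℝ) (x : Fin m → ℝ),
        pd a (pd b (fun y => G (v, y))) x = fderiv ℝ (D b) (v, x) (0, Pi.single a 1) := by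
      intro a b v x
      have inner : ∀ x, pd b (fun y => G (v, y)) x = D b (v, x) := fun x => hey G hGd v b x
      rw [pd_congr _ inner]
      exact hey (D b) (hDd b) v a x
    have f3 : ∀ p, ∑ a : Fin m, ∑ b : Fin m,
        ηinv a b * pd (tIdx a) (pd (tIdx b) h) p = 0 := by
      intro p
      have hx := hGlap (p 1) (fun a => p (tIdx a))
      calc ∑ a : Fin m, ∑ b : Fin m, ηinv a b * pd (tIdx a) (pd (tIdx b) h) p
          = ∑ a : Fin m, ∑ b : Fin m,
              ηinv a b * pd a (pd b (fun y => G (p 1, y))) (fun a => p (tIdx a)) := by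
            refine Finset.sum_congr rfl fun a _ => Finset.sum_congr rfl fun b _ => ?_
            rw [e2 a b p, e3 a b (p 1) (fun a => p (tIdx a)), phiMap_apply]
        _ = 0 := hx
    intro p β δ
    rw [ricci_eq η ηinv hh]
    have hcomm := pd_comm hh 1 0 p
    rcases idx_cases β with hβ | hβ | ⟨a, hβ⟩ <;> rcases idx_cases δ with hδ | hδ | ⟨b, hδ⟩ <;>
        subst hβ <;> subst hδ <;>
        simp [f1, f2, f3, hcomm] <;> ring_nf <;> simp [f1, f2, f3]
end
end
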